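/- arXiv:1905.07329 — 2 statements merged into one kernel-verified Lean document; each statement's English description precedes it below -/
import Mathlib

section
/- Let X and Y be simplicial complexes on the same ground set V. If X collapses to Y, then the Alexander dual X* anticollapses to the Alexander dual Y*. -/
/-- A simplicial complex: a collection of finite subsets of the vertex type,
closed under taking subsets. -/
def IsComplex {V : Type*} [DecidableEq V] (X : Set (Finset V)) : Prop :=
  ∀ σ ∈ X, ∀ τ : Finset V, τ ⊆ σ → τ ∈ X

/-- `τ` is a free face of `X`, with `σ` the unique face of `X` properly containing `τ`. -/
def IsFreeFace {V : Type*} [DecidableEq V] (X : Set (Finset V)) (τ σ : Finset V) : Prop :=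
  τ ∈ X ∧ τ.Nonempty ∧ σ ∈ X ∧ τ ⊂ σ ∧ ∀ ρ ∈ X, τ ⊂ ρ → ρ = σ

/-- `X` has a free face. -/
def HasFreeFace {V : Type*} [DecidableEq V] (X : Set (Finset V)) : Prop :=
  ∃ τ σ, IsFreeFace X τ σ

/-- An elementary collapse: remove a free face `τ` together with the unique face `σ`
properly containing it. -/
def CollapseStep {V : Type*} [DecidableEq V] (X Y : Set (Finset V)) : Prop :=
  ∃ τ σ, IsFreeFace X τ σ ∧ Y = X \ {τ, σ}

/-- `X` collapses to `Y` via a finite sequence of elementary collapses. -/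
def CollapsesTo {V : Type*} [DecidableEq V] (X Y : Set (Finset V)) : Prop :=
  Relation.ReflTransGen CollapseStep X Y

/-- `X` has dimension exactly `d`: some face has `d + 1` vertices, and
every face has at most `d + 1` vertices. -/
def Dim {V : Type*} [DecidableEq V] (X : Set (Finset V)) (d : ℕ) : Prop :=
  (∃ σ ∈ X, σ.card = d + 1) ∧ ∀ σ ∈ X, σ.card ≤ d + 1

/-- An elementary anticollapse: add a pair `τ ⊂ σ` with `|σ| = |τ| + 1`, where `τ ∉ X`
and every subset of `σ` of cardinality `|σ| - 1` other than `τ` is already a face of `X`. -/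
def AnticollapseStep {V : Type*} [DecidableEq V] (X Y : Set (Finset V)) : Prop :=
  ∃ τ σ : Finset V, τ ⊂ σ ∧ σ.card = τ.card + 1 ∧ τ ∉ X ∧
    (∀ ρ ⊆ σ, ρ.card + 1 = σ.card → ρ ≠ τ → ρ ∈ X) ∧
    Y = X ∪ {τ, σ}

/-- `X` anticollapses to `Y` via a finite sequence of elementary anticollapses. -/
def AnticollapsesTo {V : Type*} [DecidableEq V] (X Y : Set (Finset V)) : Prop :=
  Relation.ReflTransGen AnticollapseStep X Y

/-- The Alexander dual of a complex `X` on the (finite) ground set `V`: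
all subsets `σ` of `V` whose complement is not a face of `X`. -/
def AlexanderDual {V : Type*} [Fintype V] [DecidableEq V] (X : Set (Finset V)) :
    Set (Finset V) :=
  {σ : Finset V | σᶜ ∉ X}


/-! Complementation reverses inclusion, so removing a free pair `τ ⊂ σ` from `X` adds the pair
`σᶜ ⊂ τᶜ` to `X*`. Freeness of `τ` says that `σ` is the only face of `X` strictly above `τ`;
dually, every facet of `τᶜ` other than `σᶜ` has its complement outside `X`, i.e. lies in `X*`,
which is exactly what an elementary anticollapse requires. -/

namespace IsFreeFace

variable {V : Type*} [DecidableEq V] {X : Set (Finset V)} {τ σ : Finset V}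

theorem coface_mem (hf : IsFreeFace X τ σ) : σ ∈ X := hf.2.2.1

theorem ssubset (hf : IsFreeFace X τ σ) : τ ⊂ σ := hf.2.2.2.1

theorem mem_pair_of_subset (hf : IsFreeFace X τ σ) {ρ : Finset V} (hρ : ρ ∈ X) (hτρ : τ ⊆ ρ) :
    ρ ∈ ({τ, σ} : Set (Finset V)) := by
  rcases hτρ.eq_or_ssubset with rfl | hlt
  · exact .inl rfl
  · exact .inr (hf.2.2.2.2 ρ hρ hlt)

theorem card_eq (hX : IsComplex X) (hf : IsFreeFace X τ σ) : σ.card = τ.card + 1 := by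
  obtain ⟨a, haσ, haτ⟩ := Finset.exists_of_ssubset hf.ssubset
  have hmem : insert a τ ∈ X := hX σ hf.coface_mem _ (Finset.insert_subset haσ hf.ssubset.subset)
  rcases hf.mem_pair_of_subset hmem (Finset.subset_insert a τ) with h | h
  · exact absurd (h ▸ Finset.mem_insert_self a τ) haτ
  · rw [← h, Finset.card_insert_of_notMem haτ]

theorem isComplex_sdiff (hX : IsComplex X) (hf : IsFreeFace X τ σ) :
    IsComplex (X \ {τ, σ}) := by
  rintro ρ ⟨hρ, hρ_pair⟩ μ hμρ
  refine ⟨hX ρ hρ μ hμρ, fun hμ_pair => hρ_pair (hf.mem_pair_of_subset hρ ?_)⟩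
  rcases hμ_pair with rfl | rfl
  · exact hμρ
  · exact hf.ssubset.subset.trans hμρ

end IsFreeFace

theorem CollapsesTo.isComplex {V : Type*} [DecidableEq V] {X Y : Set (Finset V)}
    (hX : IsComplex X) (h : CollapsesTo X Y) : IsComplex Y := by
  induction h with
  | refl => exact hX
  | tail _ hstep ih =>
    obtain ⟨τ, σ, hf, rfl⟩ := hstep
    exact hf.isComplex_sdiff ih

section AlexanderDual

variable {V : Type*} [Fintype V] [DecidableEq V]

theorem Finset.card_compl_eq_card_compl_add_one_iff {s t : Finset V} :
    sᶜ.card = tᶜ.card + 1 ↔ t.card = s.card + 1 := by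
  rw [Finset.card_compl, Finset.card_compl]
  have := s.card_le_univ
  have := t.card_le_univ
  omega

theorem alexanderDual_sdiff_pair (X : Set (Finset V)) (τ σ : Finset V) :
    AlexanderDual (X \ {τ, σ}) = AlexanderDual X ∪ {σᶜ, τᶜ} := by
  ext ρ
  simp only [AlexanderDual, Set.mem_ofPred_eq, Set.mem_sdiff, Set.mem_union, Set.mem_insert_iff,
    Set.mem_singleton_iff, eq_compl_comm, @eq_comm _ ρᶜ]
  tauto

theorem CollapseStep.anticollapseStep_alexanderDual {X Y : Set (Finset V)} (hX : IsComplex X)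
    (h : CollapseStep X Y) : AnticollapseStep (AlexanderDual X) (AlexanderDual Y) := by
  obtain ⟨τ, σ, hf, rfl⟩ := h
  refine ⟨σᶜ, τᶜ, compl_lt_compl_iff_lt.mpr hf.ssubset,
    Finset.card_compl_eq_card_compl_add_one_iff.mpr (hf.card_eq hX),
    by simpa [AlexanderDual] using hf.coface_mem, ?_, alexanderDual_sdiff_pair X τ σ⟩
  intro ρ hρτ hρ_card hρσ hρX
  have hρ_card' : ρᶜ.card = τ.card + 1 := by
    rw [← Finset.card_compl_eq_card_compl_add_one_iff, compl_compl, hρ_card]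
  rcases hf.mem_pair_of_subset hρX (Finset.subset_compl_comm.mp hρτ) with h | h
  · rw [h] at hρ_card'
    omega
  · exact hρσ (compl_eq_comm.mp h).symm

end AlexanderDual

/-- If a simplicial complex `X` collapses to `Y`, then the Alexander dual of `X`
anticollapses to the Alexander dual of `Y`. -/
theorem stmt_7 {V : Type*} [Fintype V] [DecidableEq V] (X Y : Set (Finset V))
    (hX : IsComplex X) (h : CollapsesTo X Y) :
    AnticollapsesTo (AlexanderDual X) (AlexanderDual Y) := by
  induction h with
  | refl => exact .refl
  | tail hXY hstep ih =>
    exact ih.tail (hstep.anticollapseStep_alexanderDual (CollapsesTo.isComplex hX hXY))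
end

section
/- Every non-evasive simplicial complex is collapsible. -/
/-- Non-evasiveness, defined inductively: a single vertex is non-evasive, and `X` is
non-evasive if there is a vertex `v` of `X` such that both `link(v, X)` and `del(v, X)`
are non-evasive. -/
inductive NonEvasive {V : Type*} [DecidableEq V] : Set (Finset V) → Prop
  | point (v : V) : NonEvasive {∅, ({v} : Finset V)}
  | step (X : Set (Finset V)) (v : V) (hv : ({v} : Finset V) ∈ X)
      (hlink : NonEvasive {σ : Finset V | σ ∈ X ∧ v ∉ σ ∧ insert v σ ∈ X})
      (hdel : NonEvasive {σ : Finset V | σ ∈ X ∧ v ∉ σ}) :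
      NonEvasive X

/-!
Any vertex `v` splits the complex `X` as `del(v, X) ∪ v * link(v, X)`; take `v` as in the definition.
Coning with `v` turns every elementary collapse of `link(v, X)` into one of `X`, so a collapse of
the link onto a vertex `w` collapses `X` onto `del(v, X)` plus the edge `{v, w}`. Removing the free
face `{v}` of that edge leaves `del(v, X)`, which collapses onto a vertex by induction.
-/

section Collapse

variable {V : Type*} [DecidableEq V]

def link (v : V) (X : Set (Finset V)) : Set (Finset V) :=
  {σ | σ ∈ X ∧ v ∉ σ ∧ insert v σ ∈ X}

def deletion (v : V) (X : Set (Finset V)) : Set (Finset V) :=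
  {σ | σ ∈ X ∧ v ∉ σ}

lemma isComplex_link {X : Set (Finset V)} (hX : IsComplex X) (v : V) :
    IsComplex (link v X) := by
  rintro σ ⟨hσ, hvσ, hvσX⟩ τ hτσ
  exact ⟨hX σ hσ τ hτσ, fun hvτ => hvσ (hτσ hvτ),
    hX _ hvσX _ (Finset.insert_subset_insert v hτσ)⟩

lemma isComplex_deletion {X : Set (Finset V)} (hX : IsComplex X) (v : V) :
    IsComplex (deletion v X) := by
  rintro σ ⟨hσ, hvσ⟩ τ hτσ
  exact ⟨hX σ hσ τ hτσ, fun hvτ => hvσ (hτσ hvτ)⟩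

lemma deletion_union_image_insert_link {X : Set (Finset V)} (hX : IsComplex X)
    (v : V) : deletion v X ∪ insert v '' link v X = X := by
  ext σ
  constructor
  · rintro (⟨hσ, -⟩ | ⟨σ₀, ⟨-, -, hσ⟩, rfl⟩) <;> assumption
  · intro hσ
    by_cases hvσ : v ∈ σ
    · refine Or.inr ⟨σ.erase v, ⟨hX σ hσ _ (Finset.erase_subset v σ),
        Finset.notMem_erase v σ, ?_⟩, Finset.insert_erase hvσ⟩
      rwa [Finset.insert_erase hvσ]
    · exact Or.inl ⟨hσ, hvσ⟩

lemma injOn_insert (v : V) : Set.InjOn (insert v) {σ : Finset V | v ∉ σ} :=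
  fun σ hσ τ hτ h => by
    simpa [Finset.erase_insert hσ, Finset.erase_insert hτ] using congrArg (·.erase v) h

lemma insert_ssubset_insert_iff {v : V} {σ τ : Finset V} (hσ : v ∉ σ) (hτ : v ∉ τ) :
    insert v σ ⊂ insert v τ ↔ σ ⊂ τ := by
  simp only [ssubset_iff_subset_not_subset, Finset.insert_subset_insert_iff hσ,
    Finset.insert_subset_insert_iff hτ]

lemma CollapsesTo.subset {X Y : Set (Finset V)} (h : CollapsesTo X Y) : Y ⊆ X := by
  induction h with
  | refl => exact subset_rfl
  | tail _ hstep ih =>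
    obtain ⟨τ, σ, -, rfl⟩ := hstep
    exact Set.sdiff_subset.trans ih

section Cone

variable {v : V} {D L : Set (Finset V)}

lemma IsFreeFace.union_image_insert {τ σ : Finset V} (h : IsFreeFace L τ σ)
    (hD : ∀ ρ ∈ D, v ∉ ρ) (hL : ∀ ρ ∈ L, v ∉ ρ) :
    IsFreeFace (D ∪ insert v '' L) (insert v τ) (insert v σ) := by
  obtain ⟨hτ, -, hσ, hτσ, huniq⟩ := h
  refine ⟨Or.inr ⟨τ, hτ, rfl⟩, Finset.insert_nonempty v τ, Or.inr ⟨σ, hσ, rfl⟩,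
    (insert_ssubset_insert_iff (hL τ hτ) (hL σ hσ)).2 hτσ, ?_⟩
  rintro ρ (hρ | ⟨ρ₀, hρ₀, rfl⟩) hτρ
  · exact absurd (hτρ.subset (Finset.mem_insert_self v τ)) (hD ρ hρ)
  · rw [huniq ρ₀ hρ₀ ((insert_ssubset_insert_iff (hL τ hτ) (hL ρ₀ hρ₀)).1 hτρ)]

lemma CollapseStep.union_image_insert {L' : Set (Finset V)} (h : CollapseStep L L')
    (hD : ∀ ρ ∈ D, v ∉ ρ) (hL : ∀ ρ ∈ L, v ∉ ρ) :
    CollapseStep (D ∪ insert v '' L) (D ∪ insert v '' L') := by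
  obtain ⟨τ, σ, hfree, rfl⟩ := h
  refine ⟨insert v τ, insert v σ, hfree.union_image_insert hD hL, ?_⟩
  have hτσ : {τ, σ} ⊆ L := Set.pair_subset hfree.1 hfree.2.2.1
  have hdisj : Disjoint D {insert v τ, insert v σ} := by
    refine Set.disjoint_left.2 fun ρ hρ hmem => hD ρ hρ ?_
    rcases hmem with rfl | rfl <;> exact Finset.mem_insert_self _ _
  rw [Set.union_sdiff_distrib, hdisj.sdiff_eq_left,
    ((injOn_insert v).mono hL).image_sdiff_subset hτσ, Set.image_pair]

lemma CollapsesTo.union_image_insert {L' : Set (Finset V)} (h : CollapsesTo L L')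
    (hD : ∀ ρ ∈ D, v ∉ ρ) (hL : ∀ ρ ∈ L, v ∉ ρ) :
    CollapsesTo (D ∪ insert v '' L) (D ∪ insert v '' L') := by
  induction h with
  | refl => exact .refl
  | tail hLL' hstep ih =>
    exact ih.tail (hstep.union_image_insert hD fun ρ hρ => hL ρ (CollapsesTo.subset hLL' hρ))

lemma collapseStep_union_edge {w : V} (hD : ∀ ρ ∈ D, v ∉ ρ) (hwv : w ≠ v) :
    CollapseStep (D ∪ {{v}, {v, w}}) D := by
  have hvw : ({v} : Finset V) ⊂ {v, w} :=
    Finset.ssubset_iff_subset_ne.2 ⟨by simp, fun h => hwv (by simpa using congrArg (w ∈ ·) h)⟩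
  refine ⟨{v}, {v, w}, ⟨Or.inr (Or.inl rfl), Finset.singleton_nonempty v, Or.inr (Or.inr rfl),
    hvw, ?_⟩, ?_⟩
  · rintro ρ (hρ | rfl | rfl) hvρ
    · exact absurd (hvρ.subset (Finset.mem_singleton_self v)) (hD ρ hρ)
    · exact absurd hvρ (lt_irrefl _)
    · rfl
  · refine (Set.union_sdiff_cancel_right fun ρ ⟨hρ, hmem⟩ => hD ρ hρ ?_).symm
    rcases hmem with rfl | rfl <;> simp

end Cone

end Collapse

/-- Every non-evasive simplicial complex is collapsible. -/
theorem stmt_19 {V : Type*} [DecidableEq V] (X : Set (Finset V)) (hX : IsComplex X)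
    (h : NonEvasive X) :
    ∃ v : V, CollapsesTo X {∅, ({v} : Finset V)} := by
  induction h with
  | point v => exact ⟨v, .refl⟩
  | step X v _ _ _ ihlink ihdel =>
    obtain ⟨w, hlink⟩ : ∃ w, CollapsesTo (link v X) {∅, {w}} :=
      ihlink (isComplex_link hX v)
    obtain ⟨u, hdel⟩ : ∃ u, CollapsesTo (deletion v X) {∅, {u}} :=
      ihdel (isComplex_deletion hX v)
    have hw : ({w} : Finset V) ∈ link v X := hlink.subset (Or.inr rfl)
    have hwv : w ≠ v := fun hwv => hw.2.1 (Finset.mem_singleton.2 hwv.symm)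
    have hD : ∀ ρ ∈ deletion v X, v ∉ ρ := fun ρ hρ => hρ.2
    have hcone : CollapsesTo X (deletion v X ∪ {{v}, {v, w}}) := by
      simpa only [deletion_union_image_insert_link hX, Set.image_pair, Finset.insert_empty] using
        hlink.union_image_insert hD fun ρ hρ => hρ.2.1
    exact ⟨u, (hcone.tail (collapseStep_union_edge hD hwv)).trans hdel⟩
end
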